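/- Let n ≥ 1, let B ⊆ ℂ^n be an open ball, and let h : B → ℝ be C^∞ with H_h(z) = 0 for all z ∈ B (i.e., h is pluriharmonic). Then there exists a holomorphic function h₁ : B → ℂ with h(z) = h₁(z) + conj(h₁(z)) for all z ∈ B. -/

import Mathlib

open scoped ComplexConjugate

set_option synthInstance.maxHeartbeats 1000000
set_option maxHeartbeats 2000000

noncomputable section

/-- The j-th standard basis vector of ℂⁿ. -/
def ej {n : ℕ} (j : Fin n) : EuclideanSpace ℂ (Fin n) := EuclideanSpace.single j 1

/-- Second real (Fréchet) derivative of f evaluated on a pair of directions. -/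
def D2 {n : ℕ} (f : EuclideanSpace ℂ (Fin n) → ℝ) (z v w : EuclideanSpace ℂ (Fin n)) : ℝ :=
  fderiv ℝ (fderiv ℝ f) z v w

/-- The complex Hessian H_f(z)_{jk} = (∂²f/∂z_j∂z̄_k)(z). -/
def cHess {n : ℕ} (f : EuclideanSpace ℂ (Fin n) → ℝ) (z : EuclideanSpace ℂ (Fin n))
    (j k : Fin n) : ℂ :=
  (1 / 4 : ℂ) *
    (↑(D2 f z (ej j) (ej k) + D2 f z (Complex.I • ej j) (Complex.I • ej k))
      + Complex.I * ↑(D2 f z (ej j) (Complex.I • ej k) - D2 f z (Complex.I • ej j) (ej k)))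


variable {n : ℕ}

lemma pilp_sum_apply {ι : Type*} (s : Finset ι) (f : ι → EuclideanSpace ℂ (Fin n)) (j : Fin n) :
    (∑ x ∈ s, f x) j = ∑ x ∈ s, f x j := by
  induction s using Finset.cons_induction with
  | empty => rfl
  | cons a s ha ih => rw [Finset.sum_cons, Finset.sum_cons, PiLp.add_apply, ih]

lemma coord_le_norm (v : EuclideanSpace ℂ (Fin n)) (k : Fin n) : ‖v k‖ ≤ ‖v‖ := by
  rw [EuclideanSpace.norm_eq]
  calc ‖v k‖ = Real.sqrt (‖v k‖^2) := (Real.sqrt_sq (norm_nonneg _)).symm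
  _ ≤ _ := Real.sqrt_le_sqrt (Finset.single_le_sum (f := fun i => ‖v i‖^2)
      (fun i _ => sq_nonneg _) (Finset.mem_univ k))

lemma decomp (v : EuclideanSpace ℂ (Fin n)) :
    v = ∑ m, ((v m).re • ej m + (v m).im • (Complex.I • ej m)) := by
  ext j
  rw [pilp_sum_apply]
  simp only [ej, PiLp.add_apply, PiLp.smul_apply, EuclideanSpace.single_apply, smul_ite, smul_zero, Complex.real_smul, smul_eq_mul]
  rw [Finset.sum_congr rfl (fun x _ => ?_), Finset.sum_ite_eq (Finset.univ) j
      (fun x => ((v x).re : ℂ) + (v x).im * Complex.I)]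
  · simp [Complex.re_add_im]
  · by_cases hx : j = x <;> simp [hx] <;> ring

lemma clm_decomp {M : Type*} [NormedAddCommGroup M] [NormedSpace ℝ M]
    (T : EuclideanSpace ℂ (Fin n) →L[ℝ] M) (v : EuclideanSpace ℂ (Fin n)) :
    T v = ∑ m, ((v m).re • T (ej m) + (v m).im • T (Complex.I • ej m)) := by
  conv_lhs => rw [decomp v]
  rw [map_sum]
  simp

/-- The ℝ-linear functional extracting `g_j` from a first derivative. -/
def ee (j : Fin n) : (EuclideanSpace ℂ (Fin n) →L[ℝ] ℝ) →L[ℝ] ℂ :=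
  (1/2 : ℂ) • (Complex.ofRealCLM.comp (ContinuousLinearMap.apply ℝ ℝ (ej j)))
    - ((1/2 : ℂ) * Complex.I) • (Complex.ofRealCLM.comp
        (ContinuousLinearMap.apply ℝ ℝ (Complex.I • ej j)))

lemma ee_apply (j : Fin n) (L : EuclideanSpace ℂ (Fin n) →L[ℝ] ℝ) :
    ee j L = (1/2 : ℂ) * (L (ej j) : ℂ) - (1/2 : ℂ) * Complex.I * (L (Complex.I • ej j) : ℂ) := by
  simp [ee, smul_eq_mul]

/-- g h j = ∂h/∂z_j. -/
def gg {n : ℕ} (h : EuclideanSpace ℂ (Fin n) → ℝ) (j : Fin n)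
    (z : EuclideanSpace ℂ (Fin n)) : ℂ := ee j (fderiv ℝ h z)

lemma Dcalc (h : EuclideanSpace ℂ (Fin n) → ℝ) (w v : EuclideanSpace ℂ (Fin n)) :
    (fderiv ℝ h w v : ℝ) = 2 * (∑ k, gg h k w * v k).re := by
  rw [clm_decomp (fderiv ℝ h w) v]
  simp only [gg, ee_apply]
  rw [Complex.re_sum]
  push_cast
  rw [Finset.mul_sum]
  congr 1
  ext k
  set a := fderiv ℝ h w (ej k)
  set b := fderiv ℝ h w (Complex.I • ej k)
  have : ((1/2 : ℂ) * a - 1/2 * Complex.I * b) * v k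
      = (1/2 * a - 1/2 * Complex.I * b) * ((v k).re + (v k).im * Complex.I) := by
    rw [Complex.re_add_im]
  rw [this]
  simp [Complex.ext_iff]
  ring

/-- Candidate ℂ-linear derivative of `gg h j` at `z`. -/
def Lg {n : ℕ} (h : EuclideanSpace ℂ (Fin n) → ℝ) (j : Fin n)
    (z : EuclideanSpace ℂ (Fin n)) : EuclideanSpace ℂ (Fin n) →L[ℂ] ℂ :=
  ∑ m, (ee j (fderiv ℝ (fderiv ℝ h) z (ej m))) • (EuclideanSpace.proj m :
    EuclideanSpace ℂ (Fin n) →L[ℂ] ℂ)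

section main
variable {n : ℕ} {c : EuclideanSpace ℂ (Fin n)} {r : ℝ}
  {h : EuclideanSpace ℂ (Fin n) → ℝ} {z : EuclideanSpace ℂ (Fin n)}

lemma hd_h (hsm : ContDiffOn ℝ (⊤ : ℕ∞) h (Metric.ball c r)) (hz : z ∈ Metric.ball c r) :
    HasFDerivAt h (fderiv ℝ h z) z :=
  ((hsm.differentiableOn (by simp) z hz).differentiableAt
    (Metric.isOpen_ball.mem_nhds hz)).hasFDerivAt

lemma contDiffOn_fderiv (hsm : ContDiffOn ℝ (⊤ : ℕ∞) h (Metric.ball c r)) :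
    ContDiffOn ℝ (⊤ : ℕ∞) (fderiv ℝ h) (Metric.ball c r) :=
  hsm.fderiv_of_isOpen Metric.isOpen_ball (by simp)

lemma hd_fderiv (hsm : ContDiffOn ℝ (⊤ : ℕ∞) h (Metric.ball c r)) (hz : z ∈ Metric.ball c r) :
    HasFDerivAt (fderiv ℝ h) (fderiv ℝ (fderiv ℝ h) z) z :=
  (((contDiffOn_fderiv hsm).differentiableOn (by simp) z hz).differentiableAt
    (Metric.isOpen_ball.mem_nhds hz)).hasFDerivAt

lemma d2_symm (hsm : ContDiffOn ℝ (⊤ : ℕ∞) h (Metric.ball c r)) (hz : z ∈ Metric.ball c r)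
    (v w : EuclideanSpace ℂ (Fin n)) : D2 h z v w = D2 h z w v := by
  show fderiv ℝ (fderiv ℝ h) z v w = fderiv ℝ (fderiv ℝ h) z w v
  refine second_derivative_symmetric_of_eventually (f := h) ?_ (hd_fderiv hsm hz) v w
  filter_upwards [Metric.isOpen_ball.mem_nhds hz] with y hy using hd_h hsm hy

lemma cr_re {j m : Fin n} (hsm : ContDiffOn ℝ (⊤ : ℕ∞) h (Metric.ball c r))
    (hz : z ∈ Metric.ball c r)
    (hc : D2 h z (ej j) (ej m) + D2 h z (Complex.I • ej j) (Complex.I • ej m) = 0)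
    (hd : D2 h z (ej j) (Complex.I • ej m) - D2 h z (Complex.I • ej j) (ej m) = 0) :
    ee j (fderiv ℝ (fderiv ℝ h) z (Complex.I • ej m))
      = Complex.I * ee j (fderiv ℝ (fderiv ℝ h) z (ej m)) := by
  have h1 : D2 h z (Complex.I • ej m) (ej j) = D2 h z (ej m) (Complex.I • ej j) := by
    rw [d2_symm hsm hz, sub_eq_zero.mp hd, d2_symm hsm hz]
  have h2 : D2 h z (ej m) (ej j) + D2 h z (Complex.I • ej m) (Complex.I • ej j) = 0 := by
    rw [d2_symm hsm hz (ej m), d2_symm hsm hz (Complex.I • ej m)]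
    exact hc
  rw [ee_apply, ee_apply]
  have e1 : (fderiv ℝ (fderiv ℝ h) z (Complex.I • ej m)) (ej j) = D2 h z (Complex.I • ej m) (ej j) := rfl
  have e2 : (fderiv ℝ (fderiv ℝ h) z (Complex.I • ej m)) (Complex.I • ej j)
      = D2 h z (Complex.I • ej m) (Complex.I • ej j) := rfl
  have e3 : (fderiv ℝ (fderiv ℝ h) z (ej m)) (ej j) = D2 h z (ej m) (ej j) := rfl
  have e4 : (fderiv ℝ (fderiv ℝ h) z (ej m)) (Complex.I • ej j)
      = D2 h z (ej m) (Complex.I • ej j) := rfl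
  rw [e1, e2, e3, e4, h1]
  have h3 : D2 h z (Complex.I • ej m) (Complex.I • ej j) = - D2 h z (ej m) (ej j) := by
    linarith
  rw [h3]
  push_cast
  ring_nf
  simp [Complex.I_sq]
  ring

lemma gg_hasFDerivAt (hsm : ContDiffOn ℝ (⊤ : ℕ∞) h (Metric.ball c r))
    (hz : z ∈ Metric.ball c r) {j : Fin n}
    (hcr : ∀ m : Fin n, ee j (fderiv ℝ (fderiv ℝ h) z (Complex.I • ej m))
      = Complex.I * ee j (fderiv ℝ (fderiv ℝ h) z (ej m))) :
    HasFDerivAt (𝕜 := ℂ) (gg h j) (Lg h j z) z := by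
  have hA : HasFDerivAt (gg h j) ((ee j).comp (fderiv ℝ (fderiv ℝ h) z)) z :=
    (ee j).hasFDerivAt.comp z (hd_fderiv hsm hz)
  refine hasFDerivAt_of_restrictScalars ℝ hA ?_
  ext v
  have hL : (Lg h j z) v = ∑ m, (ee j (fderiv ℝ (fderiv ℝ h) z (ej m))) * v m := by
    simp [Lg, ContinuousLinearMap.sum_apply, smul_eq_mul]
  have hR : ((ee j).comp (fderiv ℝ (fderiv ℝ h) z)) v
      = ∑ m, ((v m).re • ((ee j).comp (fderiv ℝ (fderiv ℝ h) z)) (ej m)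
        + (v m).im • ((ee j).comp (fderiv ℝ (fderiv ℝ h) z)) (Complex.I • ej m)) :=
    clm_decomp _ v
  show (Lg h j z) v = ((ee j).comp (fderiv ℝ (fderiv ℝ h) z)) v
  rw [hL, hR]
  refine Finset.sum_congr rfl fun m _ => ?_
  have := hcr m
  simp only [ContinuousLinearMap.coe_comp', Function.comp_apply] at *
  rw [this]
  set w := ee j (fderiv ℝ (fderiv ℝ h) z (ej m))
  simp only [Complex.real_smul, smul_eq_mul]
  calc w * v m = w * (((v m).re : ℂ) + (v m).im * Complex.I) := by rw [Complex.re_add_im]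
  _ = ((v m).re : ℂ) * w + ((v m).im : ℂ) * (Complex.I * w) := by ring

lemma gg_contOn (hsm : ContDiffOn ℝ (⊤ : ℕ∞) h (Metric.ball c r)) (j : Fin n) :
    ContinuousOn (gg h j) (Metric.ball c r) :=
  (ee j).continuous.comp_continuousOn (contDiffOn_fderiv hsm).continuousOn

lemma Lg_contOn (hsm : ContDiffOn ℝ (⊤ : ℕ∞) h (Metric.ball c r)) (j : Fin n) :
    ContinuousOn (Lg h j) (Metric.ball c r) := by
  have hD2 : ContinuousOn (fderiv ℝ (fderiv ℝ h)) (Metric.ball c r) :=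
    (contDiffOn_fderiv hsm).continuousOn_fderiv_of_isOpen Metric.isOpen_ball (by simp)
  refine continuousOn_finset_sum _ (fun m _ => ContinuousOn.fun_smul ?_ continuousOn_const)
  exact (ee j).continuous.comp_continuousOn
    ((ContinuousLinearMap.apply ℝ (EuclideanSpace ℂ (Fin n) →L[ℝ] ℝ) (ej m)).continuous.comp_continuousOn hD2)

lemma norm_proj_le (k : Fin n) : ‖(EuclideanSpace.proj k : EuclideanSpace ℂ (Fin n) →L[ℂ] ℂ)‖ ≤ 1 :=
  ContinuousLinearMap.opNorm_le_bound _ zero_le_one (fun v => by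
    rw [one_mul]; exact coord_le_norm v k)

end main

def FF {n : ℕ} (h : EuclideanSpace ℂ (Fin n) → ℝ) (c x : EuclideanSpace ℂ (Fin n)) (t : ℝ) : ℂ :=
  ∑ k, gg h k (c + t • (x - c)) * (x k - c k)

def FF' {n : ℕ} (h : EuclideanSpace ℂ (Fin n) → ℝ) (c x : EuclideanSpace ℂ (Fin n)) (t : ℝ) :
    EuclideanSpace ℂ (Fin n) →L[ℂ] ℂ :=
  ∑ k, (gg h k (c + t • (x - c)) • (EuclideanSpace.proj k : EuclideanSpace ℂ (Fin n) →L[ℂ] ℂ)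
    + (x k - c k) • ((Lg h k (c + t • (x - c))).comp
        (t • ContinuousLinearMap.id ℂ (EuclideanSpace ℂ (Fin n)))))

section main2
variable {n : ℕ} {c : EuclideanSpace ℂ (Fin n)} {r : ℝ}
  {h : EuclideanSpace ℂ (Fin n) → ℝ} {x : EuclideanSpace ℂ (Fin n)} {t : ℝ}

lemma hasFDerivAt_FF
    (hg : ∀ k : Fin n, HasFDerivAt (𝕜 := ℂ) (gg h k) (Lg h k (c + t • (x - c))) (c + t • (x - c))) :
    HasFDerivAt (𝕜 := ℂ) (fun y => FF h c y t) (FF' h c x t) x := by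
  refine HasFDerivAt.fun_sum (fun k _ => ?_)
  have haff : HasFDerivAt (𝕜 := ℂ) (fun y : EuclideanSpace ℂ (Fin n) => c + t • (y - c))
      (t • ContinuousLinearMap.id ℂ (EuclideanSpace ℂ (Fin n))) x :=
    (((hasFDerivAt_id x).sub_const c).const_smul t).const_add c
  have hcomp : HasFDerivAt (𝕜 := ℂ) (fun y : EuclideanSpace ℂ (Fin n) => gg h k (c + t • (y - c)))
      ((Lg h k (c + t • (x - c))).comp
        (t • ContinuousLinearMap.id ℂ (EuclideanSpace ℂ (Fin n)))) x :=
    by have := (hg k).comp x haff; exact this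
  have hproj : HasFDerivAt (𝕜 := ℂ) (fun y : EuclideanSpace ℂ (Fin n) => y k - c k)
      (EuclideanSpace.proj k : EuclideanSpace ℂ (Fin n) →L[ℂ] ℂ) x :=
    ((EuclideanSpace.proj k : EuclideanSpace ℂ (Fin n)
      →L[ℂ] ℂ).hasFDerivAt).sub_const (c k)
  exact hcomp.mul hproj

lemma norm_FF'_le {M ρ : ℝ} (hM0 : 0 ≤ M) (hρ0 : 0 ≤ ρ) (ht : |t| ≤ 1)
    (hgM : ∀ k : Fin n, ‖gg h k (c + t • (x - c))‖ ≤ M)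
    (hLM : ∀ k : Fin n, ‖Lg h k (c + t • (x - c))‖ ≤ M)
    (hx : ‖x - c‖ ≤ ρ) :
    ‖FF' h c x t‖ ≤ n * (M + ρ * M) := by
  refine le_trans (norm_sum_le _ _) ?_
  have : ∀ k : Fin n, ‖gg h k (c + t • (x - c)) • (EuclideanSpace.proj k :
      EuclideanSpace ℂ (Fin n) →L[ℂ] ℂ)
      + (x k - c k) • ((Lg h k (c + t • (x - c))).comp
        (t • ContinuousLinearMap.id ℂ (EuclideanSpace ℂ (Fin n))))‖ ≤ M + ρ * M := by
    intro k
    refine le_trans (norm_add_le _ _) (add_le_add ?_ ?_)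
    · refine le_trans (ContinuousLinearMap.opNorm_smul_le _ _) ?_
      calc ‖gg h k (c + t • (x - c))‖ * ‖(EuclideanSpace.proj k : EuclideanSpace ℂ (Fin n) →L[ℂ] ℂ)‖
          ≤ M * 1 := mul_le_mul (hgM k) (norm_proj_le k) (norm_nonneg _) hM0
      _ = M := mul_one M
    · refine le_trans (ContinuousLinearMap.opNorm_smul_le _ _) ?_
      have h1 : ‖x k - c k‖ ≤ ρ := by
        have : x k - c k = (x - c) k := rfl
        rw [this]
        exact le_trans (coord_le_norm _ k) hx
      have h2 : ‖(Lg h k (c + t • (x - c))).comp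
          (t • ContinuousLinearMap.id ℂ (EuclideanSpace ℂ (Fin n)))‖ ≤ M := by
        refine le_trans (ContinuousLinearMap.opNorm_comp_le _ _) ?_
        have : ‖t • ContinuousLinearMap.id ℂ (EuclideanSpace ℂ (Fin n))‖ ≤ 1 := by
          refine le_trans (ContinuousLinearMap.opNorm_smul_le _ _) ?_
          simp only [Real.norm_eq_abs]
          calc |t| * ‖ContinuousLinearMap.id ℂ (EuclideanSpace ℂ (Fin n))‖
              ≤ 1 * 1 := mul_le_mul ht (ContinuousLinearMap.norm_id_le) (norm_nonneg _) zero_le_one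
          _ = 1 := one_mul 1
        calc ‖Lg h k (c + t • (x - c))‖ * ‖t • ContinuousLinearMap.id ℂ (EuclideanSpace ℂ (Fin n))‖
            ≤ M * 1 := mul_le_mul (hLM k) this (norm_nonneg _) hM0
        _ = M := mul_one M
      exact mul_le_mul h1 h2 (norm_nonneg _) hρ0
  refine le_trans (Finset.sum_le_sum (fun k _ => this k)) ?_
  rw [Finset.sum_const, Finset.card_univ, Fintype.card_fin, nsmul_eq_mul]

lemma seg_dist {z : EuclideanSpace ℂ (Fin n)} {ρ : ℝ} (hz : dist z c ≤ ρ)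
    (ht0 : 0 ≤ t) (ht1 : t ≤ 1) : dist (c + t • (z - c)) c ≤ ρ := by
  rw [dist_eq_norm, add_sub_cancel_left, norm_smul, Real.norm_eq_abs, abs_of_nonneg ht0]
  calc t * ‖z - c‖ ≤ 1 * ‖z - c‖ :=
        mul_le_mul_of_nonneg_right ht1 (norm_nonneg _)
  _ = dist z c := by rw [one_mul, dist_eq_norm]
  _ ≤ ρ := hz

lemma FF_eq (z : EuclideanSpace ℂ (Fin n)) (t : ℝ) :
    fderiv ℝ h (c + t • (z - c)) (z - c) = 2 * (FF h c z t).re := by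
  rw [Dcalc]
  rfl

lemma ftc (hsm : ContDiffOn ℝ (⊤ : ℕ∞) h (Metric.ball c r)) {z : EuclideanSpace ℂ (Fin n)}
    (hz : z ∈ Metric.ball c r) :
    h z = h c + ∫ t in (0:ℝ)..1, 2 * (FF h c z t).re := by
  have hγ : ∀ t ∈ Set.uIcc (0:ℝ) 1, c + t • (z - c) ∈ Metric.ball c r := by
    intro t ht
    rw [Set.uIcc_of_le zero_le_one] at ht
    exact lt_of_le_of_lt (seg_dist (le_refl _) ht.1 ht.2) (Metric.mem_ball.mp hz)
  have hder : ∀ t ∈ Set.uIcc (0:ℝ) 1, HasDerivAt (fun s => h (c + s • (z - c)))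
      (fderiv ℝ h (c + t • (z - c)) (z - c)) t := by
    intro t ht
    have hγ' : HasDerivAt (fun s : ℝ => c + s • (z - c)) (z - c) t := by
      simpa using ((hasDerivAt_id t).smul_const (z - c)).const_add c
    exact (hd_h hsm (hγ t ht)).comp_hasDerivAt t hγ'
  have hcont : ContinuousOn (fun t : ℝ => fderiv ℝ h (c + t • (z - c)) (z - c))
      (Set.uIcc (0:ℝ) 1) := by
    have h1 : ContinuousOn (fun t : ℝ => fderiv ℝ h (c + t • (z - c)))
        (Set.uIcc (0:ℝ) 1) := by
      refine ((contDiffOn_fderiv hsm).continuousOn).comp ?_ hγ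
      exact (continuous_const.add ((continuous_id.smul continuous_const))).continuousOn
    exact h1.clm_apply continuousOn_const
  have hint : IntervalIntegrable (fun t : ℝ => fderiv ℝ h (c + t • (z - c)) (z - c))
      MeasureTheory.volume 0 1 := hcont.intervalIntegrable
  have hFTC := intervalIntegral.integral_eq_sub_of_hasDerivAt hder hint
  simp only [one_smul, zero_smul, add_sub_cancel, add_zero] at hFTC
  have : ∫ t in (0:ℝ)..1, 2 * (FF h c z t).re
      = ∫ t in (0:ℝ)..1, fderiv ℝ h (c + t • (z - c)) (z - c) := by
    refine intervalIntegral.integral_congr (fun t _ => ?_)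
    exact (FF_eq z t).symm
  rw [this, hFTC]
  ring

lemma contFF (hsm : ContDiffOn ℝ (⊤ : ℕ∞) h (Metric.ball c r)) {x : EuclideanSpace ℂ (Fin n)}
    (hx : ∀ t ∈ Set.Icc (0:ℝ) 1, c + t • (x - c) ∈ Metric.ball c r) :
    ContinuousOn (fun t => FF h c x t) (Set.Icc (0:ℝ) 1) := by
  unfold FF
  refine continuousOn_finset_sum _ (fun k _ => ContinuousOn.mul ?_ continuousOn_const)
  exact (gg_contOn hsm k).comp
    (continuous_const.add (continuous_id.smul continuous_const)).continuousOn hx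

lemma contFF' (hsm : ContDiffOn ℝ (⊤ : ℕ∞) h (Metric.ball c r)) {x : EuclideanSpace ℂ (Fin n)}
    (hx : ∀ t ∈ Set.Icc (0:ℝ) 1, c + t • (x - c) ∈ Metric.ball c r) :
    ContinuousOn (fun t => FF' h c x t) (Set.Icc (0:ℝ) 1) := by
  unfold FF'
  have haff : Continuous (fun t : ℝ => c + t • (x - c)) :=
    continuous_const.add (continuous_id.smul continuous_const)
  refine continuousOn_finset_sum _ (fun k _ => ContinuousOn.add ?_ ?_)
  · exact ContinuousOn.smul ((gg_contOn hsm k).comp haff.continuousOn hx) continuousOn_const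
  · refine ContinuousOn.fun_smul continuousOn_const ?_
    refine ContinuousOn.clm_comp ((Lg_contOn hsm k).comp haff.continuousOn hx) ?_
    exact (continuous_id.smul continuous_const).continuousOn

end main2

/-- a pluriharmonic C^∞ function h on an open ball B ⊆ ℂⁿ is of the form
h = h₁ + conj h₁ with h₁ holomorphic on B. -/
theorem pluriharmonic_eq_re_holomorphic (n : ℕ) (hn : 1 ≤ n)
    (c : EuclideanSpace ℂ (Fin n)) (r : ℝ) (hr : 0 < r)
    (h : EuclideanSpace ℂ (Fin n) → ℝ)
    (hsm : ContDiffOn ℝ (⊤ : ℕ∞) h (Metric.ball c r))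
    (hph : ∀ z ∈ Metric.ball c r, ∀ j k : Fin n, cHess h z j k = 0) :
    ∃ h₁ : EuclideanSpace ℂ (Fin n) → ℂ,
      DifferentiableOn ℂ h₁ (Metric.ball c r) ∧
      ∀ z ∈ Metric.ball c r, (h z : ℂ) = h₁ z + conj (h₁ z) := by
  -- Cauchy–Riemann relations for the gradient functions `gg h k`
  have hcr : ∀ z ∈ Metric.ball c r, ∀ j m : Fin n,
      ee j (fderiv ℝ (fderiv ℝ h) z (Complex.I • ej m))
        = Complex.I * ee j (fderiv ℝ (fderiv ℝ h) z (ej m)) := by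
    intro z hz j m
    have h0 := hph z hz j m
    rw [cHess] at h0
    have h4 : ((D2 h z (ej j) (ej m) + D2 h z (Complex.I • ej j) (Complex.I • ej m) : ℝ) : ℂ)
        + Complex.I * ((D2 h z (ej j) (Complex.I • ej m)
          - D2 h z (Complex.I • ej j) (ej m) : ℝ) : ℂ) = 0 := by
      have h14 : (1/4 : ℂ) ≠ 0 := by norm_num
      rcases mul_eq_zero.mp h0 with h' | h'
      · exact absurd h' h14
      · exact h'
    have hre := congrArg Complex.re h4
    have him := congrArg Complex.im h4
    simp [Complex.add_re, Complex.add_im] at hre him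
    exact cr_re hsm hz hre him
  have hgd : ∀ z ∈ Metric.ball c r, ∀ k : Fin n,
      HasFDerivAt (𝕜 := ℂ) (gg h k) (Lg h k z) z :=
    fun z hz k => gg_hasFDerivAt hsm hz (fun m => hcr z hz k m)
  refine ⟨fun x => (h c : ℂ)/2 + ∫ t in (0:ℝ)..1, FF h c x t, ?_, ?_⟩
  · -- differentiability
    intro z₀ hz₀
    have hz₀' := Metric.mem_ball.mp hz₀
    set ε := (r - dist z₀ c)/2 with hεdef
    have hε : 0 < ε := by simp only [hεdef]; linarith
    set ρ := dist z₀ c + ε with hρdef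
    have hρr : ρ < r := by simp only [hρdef, hεdef]; linarith
    have hρ0 : 0 ≤ ρ := add_nonneg dist_nonneg hε.le
    have hKB : Metric.closedBall c ρ ⊆ Metric.ball c r := Metric.closedBall_subset_ball hρr
    have hmem : ∀ x ∈ Metric.ball z₀ ε, ∀ t : ℝ, 0 ≤ t → t ≤ 1 →
        (c + t • (x - c)) ∈ Metric.closedBall c ρ := by
      intro x hx t ht0 ht1
      have hxc : dist x c ≤ ρ := by
        calc dist x c ≤ dist x z₀ + dist z₀ c := dist_triangle x z₀ c
        _ ≤ ε + dist z₀ c := by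
              have := le_of_lt (Metric.mem_ball.mp hx)
              linarith
        _ = ρ := by rw [hρdef]; ring
      exact Metric.mem_closedBall.mpr (seg_dist hxc ht0 ht1)
    -- uniform bound on the ball
    have hcG : ContinuousOn (fun w => (fun k : Fin n => (gg h k w, Lg h k w)))
        (Metric.ball c r) :=
      continuousOn_pi.mpr (fun k => (gg_contOn hsm k).prodMk (Lg_contOn hsm k))
    obtain ⟨M, hM⟩ := (isCompact_closedBall c ρ).exists_bound_of_continuousOn (hcG.mono hKB)
    have hgM : ∀ w ∈ Metric.closedBall c ρ, ∀ k : Fin n, ‖gg h k w‖ ≤ M := by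
      intro w hw k
      exact le_trans (norm_fst_le (gg h k w, Lg h k w)) (le_trans (norm_le_pi_norm (fun k : Fin n => (gg h k w, Lg h k w)) k) (hM w hw))
    have hLM : ∀ w ∈ Metric.closedBall c ρ, ∀ k : Fin n, ‖Lg h k w‖ ≤ M := by
      intro w hw k
      exact le_trans (norm_snd_le (gg h k w, Lg h k w)) (le_trans (norm_le_pi_norm (fun k : Fin n => (gg h k w, Lg h k w)) k) (hM w hw))
    have hM0 : 0 ≤ M := by
      have hc : c ∈ Metric.closedBall c ρ := Metric.mem_closedBall_self hρ0
      exact le_trans (norm_nonneg _) (hM c hc)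
    have hIoc : Set.uIoc (0:ℝ) 1 = Set.Ioc (0:ℝ) 1 := Set.uIoc_of_le zero_le_one
    have hIccB : ∀ x ∈ Metric.ball z₀ ε, ∀ t ∈ Set.Icc (0:ℝ) 1,
        c + t • (x - c) ∈ Metric.ball c r :=
      fun x hx t ht => hKB (hmem x hx t ht.1 ht.2)
    have hball : Metric.ball z₀ ε ⊆ Metric.ball c r := by
      intro x hx
      have : x = c + (1:ℝ) • (x - c) := by simp
      rw [this]
      exact hIccB x hx 1 (Set.mem_Icc.mpr ⟨zero_le_one, le_refl 1⟩)
    have key := intervalIntegral.hasFDerivAt_integral_of_dominated_of_fderiv_le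
      (𝕜 := ℂ) (F := fun x t => FF h c x t) (F' := fun x t => FF' h c x t) (x₀ := z₀)
      (a := 0) (b := 1) (μ := MeasureTheory.volume)
      (bound := fun _ => (n : ℝ) * (M + ρ * M)) (Metric.ball_mem_nhds z₀ hε)
      ?_ ?_ ?_ ?_ ?_ ?_
    · exact (((key.const_add ((h c : ℂ)/2))).differentiableAt).differentiableWithinAt
    · -- hF_meas
      filter_upwards [Metric.ball_mem_nhds z₀ hε] with x hx
      refine ContinuousOn.aestronglyMeasurable ?_ measurableSet_uIoc
      refine (contFF hsm (hIccB x hx)).mono ?_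
      rw [hIoc]; exact Set.Ioc_subset_Icc_self
    · -- hF_int
      refine ContinuousOn.intervalIntegrable ?_
      rw [Set.uIcc_of_le zero_le_one]
      exact contFF hsm (hIccB z₀ (Metric.mem_ball_self hε))
    · -- hF'_meas
      refine ContinuousOn.aestronglyMeasurable ?_ measurableSet_uIoc
      refine ((contFF' hsm (hIccB z₀ (Metric.mem_ball_self hε)))).mono ?_
      rw [hIoc]; exact Set.Ioc_subset_Icc_self
    · -- h_bound
      refine MeasureTheory.ae_of_all _ (fun t ht x hx => ?_)
      rw [hIoc] at ht
      have ht' : |t| ≤ 1 := by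
        rw [abs_of_nonneg ht.1.le]; exact ht.2
      refine norm_FF'_le hM0 hρ0 ht' ?_ ?_ ?_
      · exact fun k => hgM _ (hmem x hx t ht.1.le ht.2) k
      · exact fun k => hLM _ (hmem x hx t ht.1.le ht.2) k
      · rw [← dist_eq_norm]
        calc dist x c ≤ dist x z₀ + dist z₀ c := dist_triangle x z₀ c
        _ ≤ ε + dist z₀ c := by
              have := le_of_lt (Metric.mem_ball.mp hx)
              linarith
        _ = ρ := by rw [hρdef]; ring
    · exact intervalIntegrable_const
    · -- h_diff
      refine MeasureTheory.ae_of_all _ (fun t ht x hx => ?_)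
      rw [hIoc] at ht
      exact hasFDerivAt_FF (fun k => hgd _ (hKB (hmem x hx t ht.1.le ht.2)) k)
  · -- the identity h = h₁ + conj h₁
    intro z hz
    have hIccB : ∀ t ∈ Set.Icc (0:ℝ) 1, c + t • (z - c) ∈ Metric.ball c r := by
      intro t ht
      exact lt_of_le_of_lt (seg_dist (le_refl (dist z c)) ht.1 ht.2) (Metric.mem_ball.mp hz)
    have hint : IntervalIntegrable (fun t => FF h c z t) MeasureTheory.volume 0 1 := by
      refine ContinuousOn.intervalIntegrable ?_
      rw [Set.uIcc_of_le zero_le_one]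
      exact contFF hsm hIccB
    have hre : (∫ t in (0:ℝ)..1, FF h c z t).re = ∫ t in (0:ℝ)..1, (FF h c z t).re := by
      simpa using (ContinuousLinearMap.intervalIntegral_comp_comm Complex.reCLM hint).symm
    have hftc := ftc hsm hz
    have h2 : ∫ t in (0:ℝ)..1, 2 * (FF h c z t).re
        = 2 * ∫ t in (0:ℝ)..1, (FF h c z t).re := intervalIntegral.integral_const_mul 2 _
    set I := ∫ t in (0:ℝ)..1, FF h c z t with hIdef
    have hconj : conj ((h c : ℂ)/2 + I) = (h c : ℂ)/2 + conj I := by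
      have h22 : (starRingEnd ℂ) 2 = 2 := by
        simp [Complex.ext_iff]
      rw [map_add, map_div₀, Complex.conj_ofReal, h22]
    rw [hconj]
    have hring : (h c : ℂ)/2 + I + ((h c : ℂ)/2 + conj I) = (h c : ℂ) + (I + conj I) := by ring
    rw [hring, Complex.add_conj, hftc, h2, hre]
    push_cast
    ring
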